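/- arXiv:1710.09760 — 8 statements merged into one kernel-verified Lean document; each statement's English description precedes it below -/
import Mathlib

section
/- For every prime p and every positive integer n, the equation x^2 - ((2np)^2 - 1)·y^2 = p has no integer solutions. -/
/-!
The norm form `x ^ 2 - (k ^ 2 - 1) * y ^ 2` has the unit `k + √(k ^ 2 - 1)`. When `0 < N < 2 (k + 1)`,
dividing a solution of norm `N` with `y ≠ 0` by this unit yields a solution with smaller `|y|`, so
descending to `y = 0` shows that `N` is a perfect square. For `k = 2 n p` and `N = p` this contradicts
the primality of `p`.
-/

theorem exists_natAbs_lt_of_sq_sub_mul_sq_eq {k N x y : ℤ} (hN : 0 < N) (hNk : N < 2 * (k + 1))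
    (hy : y ≠ 0) (h : x ^ 2 - (k ^ 2 - 1) * y ^ 2 = N) :
    ∃ x' y' : ℤ, y'.natAbs < y.natAbs ∧ x' ^ 2 - (k ^ 2 - 1) * y' ^ 2 = N := by
  set a := |x|
  set c := |y|
  have ha : 0 ≤ a := abs_nonneg x
  have hc : 0 < c := abs_pos.mpr hy
  have hk : 0 ≤ k := by omega
  have hac : a ^ 2 - (k ^ 2 - 1) * c ^ 2 = N := by rwa [sq_abs, sq_abs]
  -- `a / c` lies strictly between `k - 1` and `k + 1`, so `k c - a` is smaller than `c` in absolute value.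
  have h_upper : a < (k + 1) * c := by
    by_contra! hge
    have hsq : ((k + 1) * c) ^ 2 ≤ a ^ 2 := pow_le_pow_left₀ (by positivity) hge 2
    nlinarith [one_le_pow₀ (M₀ := ℤ) (n := 2) hc]
  have h_lower : (k - 1) * c < a := by nlinarith
  refine ⟨k * a - (k ^ 2 - 1) * c, k * c - a, ?_, by linear_combination hac⟩
  rw [← Int.natAbs_abs y, Int.natAbs_lt_iff_sq_lt]
  nlinarith

theorem isSquare_of_sq_sub_mul_sq_eq {k N : ℤ} (hN : 0 < N) (hNk : N < 2 * (k + 1)) (x y : ℤ)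
    (h : x ^ 2 - (k ^ 2 - 1) * y ^ 2 = N) : IsSquare N := by
  induction hb : y.natAbs using Nat.strong_induction_on generalizing x y with
  | _ b ih =>
    obtain rfl | hy := eq_or_ne y 0
    · exact ⟨x, by rw [← h]; ring⟩
    obtain ⟨x', y', hlt, h'⟩ := exists_natAbs_lt_of_sq_sub_mul_sq_eq hN hNk hy h
    exact ih _ (hb ▸ hlt) x' y' h' rfl

theorem stmt_0 (p n : ℕ) (hp : p.Prime) (hn : 1 ≤ n) :
    ¬ ∃ x y : ℤ, x ^ 2 - ((2 * (n : ℤ) * p) ^ 2 - 1) * y ^ 2 = p := by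
  rintro ⟨x, y, hxy⟩
  have hp_pos : (0 : ℤ) < p := by exact_mod_cast hp.pos
  have hn' : (1 : ℤ) ≤ n := by exact_mod_cast hn
  have hp_lt : (p : ℤ) < 2 * (2 * n * p + 1) := by nlinarith
  exact (Nat.prime_iff_prime_int.mp hp).not_isSquare
    (isSquare_of_sq_sub_mul_sq_eq hp_pos hp_lt x y hxy)
end

section
/- For every prime p and every positive integer n, the equation x^2 - ((2np)^2 - 1)·y^2 = -p has no integer solutions. -/
/-!
The map `(x, y) ↦ (a x - (a² - 1) y, a y - x)`, multiplication by the unit `a - √(a² - 1)`,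
preserves `x² - (a² - 1) y²`. For a solution of `x² - (a² - 1) y² = -N` with `x, y > 0` and
`0 < N < 2 (a - 1)` one finds `(a - 1) y < x < a y`, so the map produces a solution with a strictly
smaller positive `y`. Infinite descent leaves only `y = 0`, where `x² = -N` is impossible.
With `a = 2np` and `N = p` the bound reads `p < 2 (2np - 1)`.
-/

lemma sq_sub_pell_mul_sq_descent (a x y : ℤ) :
    (a * x - (a ^ 2 - 1) * y) ^ 2 - (a ^ 2 - 1) * (a * y - x) ^ 2 =
      x ^ 2 - (a ^ 2 - 1) * y ^ 2 := by
  ring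

section

variable {a N x y : ℤ} (hN : 0 < N) (hNa : N < 2 * (a - 1))
  (h : x ^ 2 - (a ^ 2 - 1) * y ^ 2 = -N)
include hN hNa h

lemma lt_mul_of_sq_sub_pell_mul_sq_eq_neg (hy : 0 < y) : x < a * y := by
  have : x ^ 2 < (a * y) ^ 2 := by nlinarith
  exact lt_of_pow_lt_pow_left₀ 2 (by nlinarith) this

lemma sub_one_mul_lt_of_sq_sub_pell_mul_sq_eq_neg (hx : 0 ≤ x) : (a - 1) * y < x := by
  have hy2 : 0 < y ^ 2 := by
    rcases eq_or_ne y 0 with rfl | hy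
    · nlinarith
    · positivity
  have : ((a - 1) * y) ^ 2 < x ^ 2 := by nlinarith
  exact lt_of_pow_lt_pow_left₀ 2 hx this

end

theorem sq_sub_pell_mul_sq_ne_neg {a N : ℤ} (hN : 0 < N) (hNa : N < 2 * (a - 1)) (x y : ℤ) :
    x ^ 2 - (a ^ 2 - 1) * y ^ 2 ≠ -N := by
  induction hk : y.natAbs using Nat.strong_induction_on generalizing x y with
  | _ k IH =>
  intro h
  rw [← sq_abs x, ← sq_abs y] at h
  rcases (abs_nonneg y).eq_or_lt with hy | hy
  · rw [← hy] at h
    nlinarith [sq_nonneg |x|]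
  have hlt := lt_mul_of_sq_sub_pell_mul_sq_eq_neg hN hNa h hy
  have hgt := sub_one_mul_lt_of_sq_sub_pell_mul_sq_eq_neg hN hNa h (abs_nonneg x)
  have hsmaller : (a * |y| - |x|).natAbs < k := by
    rw [← hk, ← Int.natAbs_abs y]
    exact Int.natAbs_lt_natAbs_of_nonneg_of_lt (by linarith) (by linarith)
  exact IH _ hsmaller (a * |x| - (a ^ 2 - 1) * |y|) _ rfl
    ((sq_sub_pell_mul_sq_descent a |x| |y|).trans h)

theorem stmt_1 (p n : ℕ) (hp : p.Prime) (hn : 1 ≤ n) :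
    ¬ ∃ x y : ℤ, x ^ 2 - ((2 * (n : ℤ) * p) ^ 2 - 1) * y ^ 2 = -p := by
  rintro ⟨x, y, h⟩
  have hp1 : (1 : ℤ) ≤ p := by exact_mod_cast hp.one_le
  have hn1 : (1 : ℤ) ≤ n := by exact_mod_cast hn
  have hbound : (p : ℤ) < 2 * (2 * n * p - 1) := by nlinarith
  exact sq_sub_pell_mul_sq_ne_neg (by omega) hbound x y h
end

section
/- For every prime p and every positive integer n divisible by 3, the equation x^2 - ((2np)^2 + 3)·y^2 = p has no integer solutions. -/
/-!
Write `n = 3t` and `K = 2tp`, so that the discriminant is `9K² + 3`. Multiplication by the unit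
`6K² + 1 - 2K√(9K² + 3)` of norm `1` preserves `x² - (9K² + 3)y²` and sends `(x, y)` with
`x = a + 3Ky`, `a ≥ 1`, to a solution with second coordinate `y - 2Ka`. Since
`p = a² + 3y(2Ka - y)`, either `y > 2Ka` and this step descends to a smaller `y ≥ 0`, or `y = 2Ka`
and `p = a²`, or `0 < y < 2Ka` and `p ≥ 6K - 2 > p`. At `y = 0` the prime `p` would be a square.
-/

def normForm (K X Y : ℤ) : ℤ := X ^ 2 - (9 * K ^ 2 + 3) * Y ^ 2

lemma normForm_abs (K X Y : ℤ) : normForm K |X| |Y| = normForm K X Y := by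
  simp only [normForm, sq_abs]

lemma normForm_unit_mul (K X Y : ℤ) :
    normForm K ((6 * K ^ 2 + 1) * X - 6 * K * (3 * K ^ 2 + 1) * Y)
      ((6 * K ^ 2 + 1) * Y - 2 * K * X) = normForm K X Y := by
  unfold normForm; ring

section

variable {K N : ℤ}

lemma normForm_descent (hN0 : 0 ≤ N) (hsq : ¬ IsSquare N) (hNK : N < 6 * K - 2)
    {X Y : ℤ} (hX : 0 ≤ X) (hY : 0 < Y) (hXY : normForm K X Y = N) :
    ∃ X' Y', 0 ≤ Y' ∧ Y' < Y ∧ normForm K X' Y' = N := by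
  have hXY' : X ^ 2 - (9 * K ^ 2 + 3) * Y ^ 2 = N := hXY
  have hK : 0 < K := by linarith
  have hX_gt : 3 * K * Y < X := by
    nlinarith [mul_pos hK hY, sq_nonneg (X + 3 * K * Y)]
  set a := X - 3 * K * Y with ha
  have ha1 : 1 ≤ a := by linarith
  have hNa : N = a ^ 2 + 3 * Y * (2 * K * a - Y) := by rw [ha]; linear_combination -hXY'
  rcases lt_trichotomy (2 * K * a) Y with hlt | heq | hgt
  · have hY' : (6 * K ^ 2 + 1) * Y - 2 * K * X = Y - 2 * K * a := by rw [ha]; ring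
    refine ⟨_, _, ?_, ?_, (normForm_unit_mul K X Y).trans hXY⟩ <;> rw [hY']
    · linarith
    · nlinarith
  · exact absurd ⟨a, by rw [hNa, heq]; ring⟩ hsq
  · nlinarith [mul_nonneg (sub_nonneg.2 ha1) hK.le]

theorem normForm_ne (hN0 : 0 ≤ N) (hsq : ¬ IsSquare N) (hNK : N < 6 * K - 2) (X Y : ℤ) :
    normForm K X Y ≠ N := by
  suffices h : ∀ m : ℕ, ∀ X : ℤ, normForm K |X| m ≠ N by
    rw [← normForm_abs, ← Int.natCast_natAbs]
    simpa using h Y.natAbs X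
  intro m
  induction m using Nat.strong_induction_on with
  | _ m ih =>
    intro X hX
    rcases Nat.eq_zero_or_pos m with rfl | hm
    · exact hsq ⟨|X|, by simp [normForm, ← hX, sq]⟩
    · obtain ⟨X', Y', hY'0, hY'lt, hX'⟩ :=
        normForm_descent hN0 hsq hNK (abs_nonneg X) (by exact_mod_cast hm) hX
      lift Y' to ℕ using hY'0
      exact ih Y' (by exact_mod_cast hY'lt) X' (by rwa [← normForm_abs, Nat.abs_cast] at hX')

end

theorem stmt_2 (p n : ℕ) (hp : p.Prime) (hn : 1 ≤ n) (h3 : 3 ∣ n) :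
    ¬ ∃ x y : ℤ, x ^ 2 - ((2 * (n : ℤ) * p) ^ 2 + 3) * y ^ 2 = p := by
  rintro ⟨x, y, hxy⟩
  obtain ⟨t, rfl⟩ := h3
  have hp2 : (2 : ℤ) ≤ p := by exact_mod_cast hp.two_le
  have ht : (1 : ℤ) ≤ t := by exact_mod_cast (by omega : 1 ≤ t)
  have hpK : (p : ℤ) < 6 * (2 * t * p) - 2 := by nlinarith
  refine normForm_ne (by positivity) (Nat.prime_iff_prime_int.mp hp).not_isSquare hpK x y ?_
  unfold normForm; push_cast at hxy ⊢; linear_combination hxy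
end

section
/- For every prime p and every positive integer n, the equation x^2 - (((2n+1)p)^2 + 2)·y^2 = p has no integer solutions. -/
/-!
Put `m = k ^ 2 + 2`. The number `(k ^ 2 + 1) + k √m` is a unit of norm `1` in `ℤ[√m]`, so multiplying a
solution of `x ^ 2 - m y ^ 2 = p` by its conjugate gives another solution. Starting from a solution with
`x ≥ 0` and `|y|` minimal, the new `y` is `(k ^ 2 + 1) y - k x < y`, so minimality forces it to be
`≤ -y`. Squaring that inequality gives `2 y ^ 2 < p`, while writing `x = k y + r` gives
`p = 2 k y r + r ^ 2 - 2 y ^ 2 > 2 k + 1 - p`, i.e. `k < p`. Hence there is no solution once `p ≤ k`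
and `p` is not a square; for the theorem, `k = (2 n + 1) p`.
-/

section SqSubMulSq

variable {k p a c : ℤ}

theorem sq_sub_mul_sq_descent (h : a ^ 2 - (k ^ 2 + 2) * c ^ 2 = p) :
    ((k ^ 2 + 1) * a - (k ^ 2 + 2) * k * c) ^ 2 - (k ^ 2 + 2) * ((k ^ 2 + 1) * c - k * a) ^ 2 = p := by
  linear_combination h

theorem mul_lt_of_sq_sub_mul_sq_eq (hp : 0 < p) (ha : 0 ≤ a)
    (h : a ^ 2 - (k ^ 2 + 2) * c ^ 2 = p) : k * c < a := by
  nlinarith [sq_nonneg c]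

theorem lt_of_sq_sub_mul_sq_eq_of_descent_le_neg (hc : 1 ≤ c) (hkc : k * c < a)
    (hdescent : (k ^ 2 + 1) * c - k * a ≤ -c) (h : a ^ 2 - (k ^ 2 + 2) * c ^ 2 = p) : k < p := by
  have hsq : ((k ^ 2 + 2) * c) ^ 2 ≤ (k * a) ^ 2 := by
    have : (k ^ 2 + 2) * c ≤ k * a := by linarith
    exact pow_le_pow_left₀ (by positivity) this 2
  have hcp : 2 * c ^ 2 < p := by
    have : 2 * (k ^ 2 + 2) * c ^ 2 ≤ k ^ 2 * p := by linear_combination hsq + k ^ 2 * h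
    nlinarith [sq_nonneg k]
  obtain ⟨r, hr, rfl⟩ : ∃ r, 1 ≤ r ∧ a = k * c + r := ⟨a - k * c, by linarith, by ring⟩
  have hp : p = 2 * k * c * r + r ^ 2 - 2 * c ^ 2 := by linear_combination -h
  rcases le_or_gt k 0 with hk | hk
  · linarith [sq_nonneg c]
  · nlinarith [mul_le_mul hc hr zero_le_one (by linarith : (0 : ℤ) ≤ c)]

theorem sq_sub_mul_sq_ne (hp : 0 < p) (hsq : ¬IsSquare p) (hpk : p ≤ k) (a : ℤ) (c : ℕ) :
    a ^ 2 - (k ^ 2 + 2) * (c : ℤ) ^ 2 ≠ p := by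
  induction c using Nat.strong_induction_on generalizing a with
  | _ c ih =>
  intro h
  rw [← sq_abs] at h
  rcases Nat.eq_zero_or_pos c with rfl | hc
  · exact hsq ⟨|a|, by linear_combination -h⟩
  have hkc := mul_lt_of_sq_sub_mul_sq_eq hp (abs_nonneg a) h
  have hdescent_lt : (k ^ 2 + 1) * c - k * |a| < c := by nlinarith
  by_cases hdescent : -(c : ℤ) < (k ^ 2 + 1) * c - k * |a|
  · refine ih ((k ^ 2 + 1) * c - k * |a|).natAbs (by omega)
      ((k ^ 2 + 1) * |a| - (k ^ 2 + 2) * k * c) ?_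
    rw [Int.natCast_natAbs, sq_abs]
    exact sq_sub_mul_sq_descent h
  · exact (lt_of_sq_sub_mul_sq_eq_of_descent_le_neg (by exact_mod_cast hc) hkc
      (not_lt.mp hdescent) h).not_ge hpk

theorem not_exists_sq_sub_mul_sq_eq (hp : 0 < p) (hsq : ¬IsSquare p) (hpk : p ≤ k) :
    ¬∃ x y : ℤ, x ^ 2 - (k ^ 2 + 2) * y ^ 2 = p := by
  rintro ⟨x, y, h⟩
  refine sq_sub_mul_sq_ne hp hsq hpk x y.natAbs ?_
  rwa [Int.natCast_natAbs, sq_abs]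

end SqSubMulSq

theorem stmt_4_general (p n : ℕ) (hp : p.Prime) :
    ¬ ∃ x y : ℤ, x ^ 2 - (((2 * (n : ℤ) + 1) * p) ^ 2 + 2) * y ^ 2 = p := by
  have hp_pos : (0 : ℤ) < p := by exact_mod_cast hp.pos
  refine not_exists_sq_sub_mul_sq_eq hp_pos (Nat.prime_iff_prime_int.mp hp).not_isSquare ?_
  nlinarith [(Nat.cast_nonneg n : (0 : ℤ) ≤ n)]

theorem stmt_4 (p n : ℕ) (hp : p.Prime) (hn : 1 ≤ n) :
    ¬ ∃ x y : ℤ, x ^ 2 - (((2 * (n : ℤ) + 1) * p) ^ 2 + 2) * y ^ 2 = p :=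
  stmt_4_general p n hp
end

section
/- For every prime p with p ≠ 3 and every positive integer n, the equation x^2 - (((2n+1)p)^2 - 2)·y^2 = -p has no integer solutions. -/
/-!
Write `m = k² - 2`. Multiplication by the unit `(k² - 1) - k√m` of norm `1` sends a solution
`(x, y)` of `x² - m y² = -p` with `x ≥ 0` and `y² ≥ 2p` to a solution with a smaller positive
`y`, so it suffices to rule out solutions with `0 < y² < 2p`. For those, once `k ≥ 3p`,
`m y² - p` lies strictly between the consecutive squares `(k y - 1)²` and `(k y)²`.
-/

section

variable {k p x y : ℤ}

theorem sq_sub_mul_sq_ne_neg_of_sq_lt (hk : 3 * p ≤ k) (hy : 0 < y) (hsmall : y ^ 2 < 2 * p) :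
    x ^ 2 - (k ^ 2 - 2) * y ^ 2 ≠ -p := by
  intro h
  have hky : 0 < k * y - 1 := by nlinarith
  have hupper : x ^ 2 < (k * y) ^ 2 := by nlinarith
  have hlower : (k * y - 1) ^ 2 < x ^ 2 := by nlinarith
  rw [sq_lt_sq] at hupper hlower
  rw [abs_of_pos hky] at hlower
  rw [abs_of_pos (by linarith : 0 < k * y)] at hupper
  omega

theorem pell_descent_norm (k x y : ℤ) :
    (x * (k ^ 2 - 1) - (k ^ 2 - 2) * y * k) ^ 2 - (k ^ 2 - 2) * (y * (k ^ 2 - 1) - x * k) ^ 2 =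
      x ^ 2 - (k ^ 2 - 2) * y ^ 2 := by
  ring

theorem pell_descent_lt (hp : 0 < p) (hk : 3 ≤ k) (hx : 0 ≤ x) (hy : 0 < y)
    (hlarge : 2 * p ≤ y ^ 2) (h : x ^ 2 - (k ^ 2 - 2) * y ^ 2 = -p) :
    0 < y * (k ^ 2 - 1) - x * k ∧ y * (k ^ 2 - 1) - x * k < y := by
  have hk2 : 4 < k ^ 2 := by nlinarith
  have hA : 0 < y * (k ^ 2 - 1) + x * k := by
    nlinarith [mul_pos hy (by linarith : (0 : ℤ) < k ^ 2 - 1),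
      mul_nonneg hx (by linarith : (0 : ℤ) ≤ k)]
  have hprod : (y * (k ^ 2 - 1) - x * k) * (y * (k ^ 2 - 1) + x * k) = y ^ 2 + k ^ 2 * p := by
    linear_combination (-k ^ 2) * h
  constructor
  · exact pos_of_mul_pos_left (by rw [hprod]; positivity) hA.le
  · refine lt_of_mul_lt_mul_right (a := y * (k ^ 2 - 1) + x * k) ?_ hA.le
    rw [hprod]
    nlinarith [mul_le_mul_of_nonneg_right hlarge (by linarith : (0 : ℤ) ≤ k ^ 2 - 2),
      mul_pos hp (by linarith : (0 : ℤ) < k ^ 2 - 4),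
      mul_nonneg (mul_nonneg hx hy.le) (by linarith : (0 : ℤ) ≤ k)]

theorem sq_sub_mul_sq_ne_neg (hp : 0 < p) (hk : 3 * p ≤ k) (x y : ℤ) :
    x ^ 2 - (k ^ 2 - 2) * y ^ 2 ≠ -p := by
  intro h
  have hy : 0 < |y| := abs_pos.2 (by rintro rfl; nlinarith)
  replace h : |x| ^ 2 - (k ^ 2 - 2) * |y| ^ 2 = -p := by simpa only [sq_abs] using h
  have hx := abs_nonneg x
  generalize |x| = x, |y| = y at h hx hy
  lift y to ℕ using hy.le
  induction y using Nat.strong_induction_on generalizing x with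
  | _ y ih =>
    rcases lt_or_ge ((y : ℤ) ^ 2) (2 * p) with hsmall | hlarge
    · exact sq_sub_mul_sq_ne_neg_of_sq_lt hk hy hsmall h
    · obtain ⟨hy'pos, hy'lt⟩ := pell_descent_lt hp (by linarith) hx hy hlarge h
      lift y * (k ^ 2 - 1) - x * k to ℕ using hy'pos.le with y' hy'
      exact ih y' (by exact_mod_cast hy'lt) |x * (k ^ 2 - 1) - (k ^ 2 - 2) * y * k|
        (abs_nonneg _) (by rw [sq_abs, hy', pell_descent_norm, h]) hy'pos

end

theorem stmt_7_general (p n : ℕ) (hp : p.Prime) (hn : 1 ≤ n) :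
    ¬ ∃ x y : ℤ, x ^ 2 - (((2 * (n : ℤ) + 1) * p) ^ 2 - 2) * y ^ 2 = -p := by
  rintro ⟨x, y, h⟩
  have hp0 : (0 : ℤ) < p := by exact_mod_cast hp.pos
  have hk : 3 * (p : ℤ) ≤ (2 * n + 1) * p := by
    have : (1 : ℤ) ≤ n := by exact_mod_cast hn
    nlinarith
  exact sq_sub_mul_sq_ne_neg hp0 hk x y h

theorem stmt_7 (p n : ℕ) (hp : p.Prime) (hp3 : p ≠ 3) (hn : 1 ≤ n) :
    ¬ ∃ x y : ℤ, x ^ 2 - (((2 * (n : ℤ) + 1) * p) ^ 2 - 2) * y ^ 2 = -p :=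
  stmt_7_general p n hp hn
end

section
/- For p = 3 and every positive integer n ≥ 1, there are no positive-integer solutions (x, y) of x^2 - (((2n+1)·3)^2 - 2)·y^2 = -3. -/
lemma key_desc (a : ℤ) (ha : 9 ≤ a) :
    ∀ k : ℕ, ∀ x y : ℤ, y.natAbs = k → 0 < x → 0 < y →
      x ^ 2 - (a ^ 2 - 2) * y ^ 2 = -3 → False := by
  intro k
  induction k using Nat.strong_induction_on with
  | _ k ih =>
    intro x y hk hx hy heq
    rcases eq_or_lt_of_le (show (1:ℤ) ≤ y by omega) with h1 | h2
    · -- y = 1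
      have hy1 : y = 1 := h1.symm
      subst hy1
      have hxa : x < a := by nlinarith
      have hxa1 : x ≤ a - 1 := by linarith
      nlinarith [mul_le_mul hxa1 hxa1 (by linarith : (0:ℤ) ≤ x) (by linarith : (0:ℤ) ≤ a - 1)]
    · -- y ≥ 2
      have hy2 : 2 ≤ y := h2
      -- key identity 1: ((a^2-1)*y)^2 = (a*x)^2 + y^2 + 3*a^2
      have key1 : ((a ^ 2 - 1) * y) ^ 2 = (a * x) ^ 2 + y ^ 2 + 3 * a ^ 2 := by
        linear_combination (-(a ^ 2)) * heq
      -- key identity 2: (a*x)^2 = ((a^2-2)*y)^2 + 2*(a^2-2)*y^2 - 3*a^2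
      have key2 : (a * x) ^ 2 = ((a ^ 2 - 2) * y) ^ 2 + 2 * (a ^ 2 - 2) * y ^ 2 - 3 * a ^ 2 := by
        linear_combination (a ^ 2) * heq
      have hposa : (0:ℤ) < a ^ 2 - 1 := by nlinarith
      have hax : 0 < a * x := by positivity
      have h1 : a * x < (a ^ 2 - 1) * y := by
        nlinarith [mul_pos hposa hy, key1, sq_nonneg y, sq_nonneg a]
      have hmy : (0:ℤ) < (a ^ 2 - 2) * y := by nlinarith
      have h2lin : (a ^ 2 - 2) * y < a * x := by
        nlinarith [key2, sq_nonneg (y - 2), hmy, hax]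
      have hy'pos : 0 < (a ^ 2 - 1) * y - a * x := by linarith
      have hy'lt : (a ^ 2 - 1) * y - a * x < y := by linarith
      set y' : ℤ := (a ^ 2 - 1) * y - a * x with hy'
      set x' : ℤ := (a ^ 2 - 1) * x - (a ^ 2 - 2) * a * y with hx'
      have hsol : x' ^ 2 - (a ^ 2 - 2) * y' ^ 2 = -3 := by
        rw [hx', hy']; linear_combination heq
      have hx'ne : x' ≠ 0 := by
        intro h0
        rw [h0] at hsol
        have h79 : (79:ℤ) ≤ a ^ 2 - 2 := by nlinarith
        have hy1 : (1:ℤ) ≤ y' ^ 2 := by nlinarith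
        nlinarith [mul_le_mul h79 hy1 (by norm_num) (by linarith)]
      have habs : (0:ℤ) < |x'| := abs_pos.mpr hx'ne
      have hlt : y'.natAbs < k := by
        rw [← hk]; omega
      exact ih y'.natAbs hlt |x'| y' rfl habs hy'pos (by rw [sq_abs]; exact hsol)

theorem stmt_8 (n : ℕ) (hn : 1 ≤ n) :
    ¬ ∃ x y : ℤ, 0 < x ∧ 0 < y ∧
      x ^ 2 - (((2 * (n : ℤ) + 1) * 3) ^ 2 - 2) * y ^ 2 = -3 := by
  rintro ⟨x, y, hx, hy, h⟩
  have ha : (9:ℤ) ≤ (2 * (n : ℤ) + 1) * 3 := by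
    have : (1:ℤ) ≤ (n:ℤ) := by exact_mod_cast hn
    linarith
  exact key_desc ((2 * (n : ℤ) + 1) * 3) ha y.natAbs x y rfl hx hy h
end

section
/- If p is a prime with p ≡ 1 (mod 4), n ≥ 1 is an integer, and m = (2np)^2 - 1 is square-free, then the class number of the real quadratic field Q(√m) is greater than 1. -/
/-!
Since `p ≡ 1 (mod 4)` there is `s` with `p ∣ s² + 1`, and `p ∣ m + 1`, so `p` divides
`s² - m = (s - √m)(s + √m)`. It divides neither factor, since it would then divide its trace
`2s`; so `p` is not prime in `𝓞 K`. If `𝓞 K` were a PID, `p` would then be a product of two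
non-units, each of norm `±p`, and writing one of them as `(t + b√m)/2` gives `t² - m b² = ±4p`.
As `m = k² - 1` with `k = 2np` even, `t` and `b` are even, and descent along the unit `k + √m`
reduces any solution of `x² - m y² = c` with `|c| < 2k - 2` to one with `y = 0`, so `±p` would
be a square.
-/

open IntermediateField NumberField Module

theorem abs_lt_of_sq_sub_pell_eq {k c a b : ℤ} (hc : |c| < 2 * k - 2) (hb : b ≠ 0)
    (h : a ^ 2 - (k ^ 2 - 1) * b ^ 2 = c) :
    (k - 1) * |b| < |a| ∧ |a| < (k + 1) * |b| := by
  have hb1 : 1 ≤ |b| := Int.one_le_abs hb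
  have hA : |a| ^ 2 = (k ^ 2 - 1) * |b| ^ 2 + c := by rw [sq_abs, sq_abs]; linarith
  have hB : 0 ≤ (2 * k - 2) * (|b| ^ 2 - 1) :=
    mul_nonneg (by linarith [abs_nonneg c]) (by nlinarith)
  have hcl := neg_abs_le c
  have hcu := le_abs_self c
  constructor
  · refine lt_of_pow_lt_pow_left₀ 2 (abs_nonneg a) ?_
    nlinarith
  · refine lt_of_pow_lt_pow_left₀ 2 (by nlinarith) ?_
    nlinarith

theorem isSquare_of_sq_sub_pell_eq {k c : ℤ} (hc : |c| < 2 * k - 2) (a b : ℤ)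
    (h : a ^ 2 - (k ^ 2 - 1) * b ^ 2 = c) : IsSquare c := by
  induction hN : b.natAbs using Nat.strong_induction_on generalizing a b with
  | _ N ih =>
  rcases eq_or_ne b 0 with rfl | hb
  · exact ⟨a, by rw [← h]; ring⟩
  obtain ⟨hlo, hhi⟩ := abs_lt_of_sq_sub_pell_eq hc hb h
  -- the new pair is `(k - √(k² - 1)) (|a| + |b| √(k² - 1))`
  refine ih (k * |b| - |a|).natAbs ?_ (k * |a| - (k ^ 2 - 1) * |b|) _ ?_ rfl
  · rw [← hN, ← Int.ofNat_lt, Int.natCast_natAbs, Int.natCast_natAbs]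
    exact abs_lt.mpr ⟨by linarith, by linarith⟩
  · rw [← h, ← sq_abs a, ← sq_abs b]; ring

theorem even_and_even_of_sq_sub_mul_sq_eq {m c a b : ℤ} (hm : m % 4 = 3)
    (h : a ^ 2 - m * b ^ 2 = 4 * c) : Even a ∧ Even b := by
  rcases Int.even_or_odd' a with ⟨x, rfl | rfl⟩ <;>
    rcases Int.even_or_odd' b with ⟨y, rfl | rfl⟩ <;> ring_nf at h
  · exact ⟨even_two_mul x, even_two_mul y⟩
  all_goals omega

theorem isSquare_of_sq_sub_pell_eq_four_mul {k c : ℤ} (hk : Even k) (hc : |c| < 2 * k - 2)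
    (a b : ℤ) (h : a ^ 2 - (k ^ 2 - 1) * b ^ 2 = 4 * c) : IsSquare c := by
  obtain ⟨j, rfl⟩ := hk
  have hm : ((j + j) ^ 2 - 1) % 4 = 3 := by
    rw [show (j + j) ^ 2 - 1 = 4 * j ^ 2 - 1 by ring]; omega
  obtain ⟨⟨x, rfl⟩, ⟨y, rfl⟩⟩ := even_and_even_of_sq_sub_mul_sq_eq hm h
  exact isSquare_of_sq_sub_pell_eq hc x y (by linarith)

theorem Squarefree.isUnit_of_isSquare {M : Type*} [Monoid M] {x : M} (hx : Squarefree x)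
    (h : IsSquare x) : IsUnit x := by
  obtain ⟨r, rfl⟩ := h
  exact (hx r dvd_rfl).mul (hx r dvd_rfl)

theorem Int.not_isSquare_of_natAbs_prime {c : ℤ} (hc : c.natAbs.Prime) : ¬ IsSquare c := by
  intro h
  rw [← Int.natAbs_of_nonneg h.nonneg, Int.isSquare_natCast_iff] at h
  exact hc.prime.not_isSquare h

theorem Nat.Prime.exists_dvd_sq_add_one {p : ℕ} (hp : p.Prime) (hp4 : p % 4 = 1) :
    ∃ s : ℤ, (p : ℤ) ∣ s ^ 2 + 1 := by
  have := Fact.mk hp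
  obtain ⟨r, hr⟩ := ZMod.exists_sq_eq_neg_one_iff.mpr (by omega : p % 4 ≠ 3)
  refine ⟨r.val, ?_⟩
  rw [← ZMod.intCast_zmod_eq_zero_iff_dvd]
  push_cast
  rw [ZMod.natCast_zmod_val, sq, ← hr, neg_add_cancel]

theorem Int.not_dvd_two_mul_of_dvd_sq_add_one {p : ℕ} (hp : p.Prime) (hp2 : p ≠ 2) {s : ℤ}
    (h : (p : ℤ) ∣ s ^ 2 + 1) : ¬ (p : ℤ) ∣ 2 * s := by
  intro h2s
  rcases Int.Prime.dvd_mul' hp h2s with h2 | hs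
  · exact hp2 ((Nat.prime_dvd_prime_iff_eq hp Nat.prime_two).mp (by exact_mod_cast h2))
  · have h1 : (p : ℤ) ∣ 1 := (Int.dvd_add_right (dvd_pow hs two_ne_zero)).mp h
    exact hp.one_lt.ne' (by exact_mod_cast Int.eq_one_of_dvd_one (by positivity) h1)

theorem Rat.exists_int_eq_of_squarefree_mul_sq {m c : ℤ} (hm : Squarefree m) {x : ℚ}
    (h : m * x ^ 2 = c) : ∃ b : ℤ, x = b := by
  have hden : (x.den : ℤ) ^ 2 ∣ m * x.num ^ 2 := by
    refine Dvd.intro c ?_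
    rw [← Rat.num_div_den x] at h
    field_simp at h
    exact_mod_cast h.symm
  have hunit : IsUnit (x.den : ℤ) :=
    hm _ (by rw [← sq]; exact (x.isCoprime_num_den.symm.pow).dvd_of_dvd_mul_right hden)
  have hden1 : x.den = 1 := by simpa using Int.isUnit_iff_natAbs_eq.mp hunit
  exact ⟨x.num, (Rat.coe_int_num_of_den_eq_one hden1).symm⟩

theorem IntermediateField.exists_basis_adjoin_of_sq {F L : Type*} [Field F] [Field L]
    [Algebra F L] {θ : L} {μ : F} (hθ : θ ^ 2 = algebraMap F L μ)
    (hθF : θ ∉ (algebraMap F L).range) :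
    ∃ B : Basis (Fin 2) F F⟮θ⟯, B 0 = 1 ∧ B 1 = AdjoinSimple.gen F θ := by
  have hroot : Polynomial.aeval θ (Polynomial.X ^ 2 - Polynomial.C μ) = 0 := by simp [hθ]
  have hint : IsIntegral F θ :=
    ⟨_, Polynomial.monic_X_pow_sub_C μ two_ne_zero, by simpa using hroot⟩
  have hdim : (adjoin.powerBasis hint).dim = 2 := by
    rw [adjoin.powerBasis_dim]
    refine le_antisymm ?_ ((minpoly.two_le_natDegree_iff hint).mpr hθF)
    have := Polynomial.natDegree_le_of_dvd (minpoly.dvd F θ hroot)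
      (Polynomial.X_pow_sub_C_ne_zero two_pos μ)
    rwa [Polynomial.natDegree_X_pow_sub_C] at this
  refine ⟨(adjoin.powerBasis hint).basis.reindex (finCongr hdim), ?_, ?_⟩ <;>
    simp [PowerBasis.coe_basis]

theorem exists_basis_adjoin_sqrt {m : ℕ} (hm : ¬ IsSquare m) :
    ∃ B : Basis (Fin 2) ℚ ℚ⟮√(m : ℝ)⟯, B 0 = 1 ∧
      B 1 * B 1 = algebraMap ℚ ℚ⟮√(m : ℝ)⟯ ((m : ℤ) : ℚ) ∧ IsIntegral ℤ (B 1) := by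
  have hθ : √(m : ℝ) ^ 2 = algebraMap ℚ ℝ ((m : ℤ) : ℚ) := by simp
  obtain ⟨B, hB0, hB1⟩ := exists_basis_adjoin_of_sq hθ (irrational_sqrt_natCast_iff.mpr hm)
  have hBsq : B 1 * B 1 = algebraMap ℚ ℚ⟮√(m : ℝ)⟯ ((m : ℤ) : ℚ) := by
    rw [← sq, hB1]; exact Subtype.ext (by simp [hθ])
  refine ⟨B, hB0, hBsq, IsIntegral.of_pow two_pos ?_⟩
  rw [sq, hBsq, map_intCast]
  exact isIntegral_intCast _

section QuadraticBasis

variable {K : Type*} [Field K] [Algebra ℚ K] {μ : ℚ} (B : Basis (Fin 2) ℚ K)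

theorem Module.Basis.repr_mul_basis_one (hB0 : B 0 = 1)
    (hB1 : B 1 * B 1 = algebraMap ℚ K μ) (x : K) :
    B.repr (x * B 1) = Finsupp.single 0 (μ * B.repr x 1) + Finsupp.single 1 (B.repr x 0) := by
  have hx : x * B 1 = (μ * B.repr x 1) • B 0 + B.repr x 0 • B 1 := by
    conv_lhs => rw [← B.sum_repr x, Fin.sum_univ_two]
    rw [add_mul, smul_mul_assoc, smul_mul_assoc, hB1, hB0, one_mul,
      Algebra.algebraMap_eq_smul_one, smul_smul, mul_comm μ, add_comm]
  simp [hx]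

theorem Algebra.norm_eq_of_basis_sq (hB0 : B 0 = 1)
    (hB1 : B 1 * B 1 = algebraMap ℚ K μ) (x : K) :
    Algebra.norm ℚ x = B.repr x 0 ^ 2 - μ * B.repr x 1 ^ 2 := by
  rw [Algebra.norm_eq_matrix_det B, Matrix.det_fin_two]
  simp only [Algebra.leftMulMatrix_eq_repr_mul, hB0, mul_one, B.repr_mul_basis_one hB0 hB1,
    Finsupp.add_apply, Finsupp.single_eq_same, Finsupp.single_eq_of_ne zero_ne_one.symm,
    Finsupp.single_eq_of_ne zero_ne_one, add_zero, zero_add]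
  ring

theorem Algebra.trace_eq_of_basis_sq (hB0 : B 0 = 1)
    (hB1 : B 1 * B 1 = algebraMap ℚ K μ) (x : K) :
    Algebra.trace ℚ K x = 2 * B.repr x 0 := by
  rw [Algebra.trace_eq_matrix_trace B, Matrix.trace_fin_two]
  simp only [Algebra.leftMulMatrix_eq_repr_mul, hB0, mul_one, B.repr_mul_basis_one hB0 hB1,
    Finsupp.add_apply, Finsupp.single_eq_same, Finsupp.single_eq_of_ne zero_ne_one.symm, zero_add]
  ring

end QuadraticBasis

theorem Algebra.dvd_trace_of_intCast_dvd {R : Type*} [CommRing R] [Module.Free ℤ R]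
    [Module.Finite ℤ R] {p : ℤ} {u : R} (h : (p : R) ∣ u) : p ∣ Algebra.trace ℤ R u := by
  obtain ⟨v, rfl⟩ := h
  exact ⟨Algebra.trace ℤ R v, by rw [← zsmul_eq_mul, map_zsmul, smul_eq_mul]⟩

section NumberField

variable {K : Type*} [Field K] [NumberField K]

theorem NumberField.RingOfIntegers.isUnit_iff_natAbs_norm_eq_one {x : 𝓞 K} :
    IsUnit x ↔ (Algebra.norm ℤ x).natAbs = 1 := by
  rw [isUnit_iff_norm, RingOfIntegers.coe_norm, ← Algebra.coe_norm_int, ← Int.cast_abs,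
    Int.cast_eq_one, Int.abs_eq_natAbs]
  omega

theorem NumberField.RingOfIntegers.trace_intCast (s : ℤ) :
    Algebra.trace ℤ (𝓞 K) s = finrank ℚ K * s := by
  rw [← eq_intCast (algebraMap ℤ (𝓞 K)), Algebra.trace_algebraMap, RingOfIntegers.rank,
    nsmul_eq_mul]

theorem NumberField.RingOfIntegers.norm_natCast (p : ℕ) :
    Algebra.norm ℤ (p : 𝓞 K) = p ^ finrank ℚ K := by
  rw [← map_natCast (algebraMap ℤ (𝓞 K)), Algebra.norm_algebraMap, RingOfIntegers.rank]

theorem exists_natAbs_norm_eq_of_not_irreducible (hK : finrank ℚ K = 2) {p : ℕ} (hp : p.Prime)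
    (hirr : ¬ Irreducible (p : 𝓞 K)) : ∃ α : 𝓞 K, (Algebra.norm ℤ α).natAbs = p := by
  have hN : ∀ α : 𝓞 K, ¬ IsUnit α → (Algebra.norm ℤ α).natAbs ≠ 1 := fun α hα h =>
    hα (RingOfIntegers.isUnit_iff_natAbs_norm_eq_one.mpr h)
  by_contra! hne
  refine hirr ⟨fun hu => ?_, fun α β hαβ => ?_⟩
  · rw [RingOfIntegers.isUnit_iff_natAbs_norm_eq_one, RingOfIntegers.norm_natCast, hK,
      Int.natAbs_pow, Int.natAbs_natCast, pow_eq_one_iff] at hu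
    exact hp.ne_one (hu.resolve_right two_ne_zero)
  · by_contra! hαβ'
    have hmul : (Algebra.norm ℤ α).natAbs * (Algebra.norm ℤ β).natAbs = p ^ 2 := by
      rw [← Int.natAbs_mul, ← map_mul, ← hαβ, RingOfIntegers.norm_natCast, hK, Int.natAbs_pow,
        Int.natAbs_natCast]
    exact hne α ((hp.mul_eq_prime_sq_iff (hN α hαβ'.1) (hN β hαβ'.2)).mp hmul).1

theorem dvd_two_mul_of_prime_of_dvd_sq_sub (hK : finrank ℚ K = 2) {m : ℤ} {g : 𝓞 K}
    (hg : g * g = m) (htr : Algebra.trace ℤ (𝓞 K) g = 0) {p s : ℤ} (hp : Prime (p : 𝓞 K))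
    (hs : p ∣ s ^ 2 - m) : p ∣ 2 * s := by
  obtain ⟨c, hc⟩ := hs
  have hfac : (p : 𝓞 K) ∣ (s - g) * (s + g) :=
    ⟨c, by rw [← Int.cast_mul, ← hc]; push_cast; rw [← hg]; ring⟩
  rcases hp.dvd_or_dvd hfac with h | h <;>
    simpa [htr, RingOfIntegers.trace_intCast, hK] using Algebra.dvd_trace_of_intCast_dvd h

theorem exists_mul_self_eq_trace_eq_zero {m : ℤ} (B : Basis (Fin 2) ℚ K) (hB0 : B 0 = 1)
    (hB1 : B 1 * B 1 = algebraMap ℚ K m) (hint : IsIntegral ℤ (B 1)) :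
    ∃ g : 𝓞 K, g * g = m ∧ Algebra.trace ℤ (𝓞 K) g = 0 := by
  let g : 𝓞 K := ⟨B 1, hint⟩
  have hg : (g : K) = B 1 := rfl
  refine ⟨g, RingOfIntegers.ext (by push_cast [hg]; exact hB1.trans (map_intCast _ _)), ?_⟩
  have : (Algebra.trace ℤ (𝓞 K) g : ℚ) = 0 := by
    simp [Algebra.coe_trace_int, hg, Algebra.trace_eq_of_basis_sq B hB0 hB1]
  exact_mod_cast this

theorem exists_sq_sub_mul_sq_eq_four_mul_norm {m : ℤ} (hm : Squarefree m)
    (B : Basis (Fin 2) ℚ K) (hB0 : B 0 = 1) (hB1 : B 1 * B 1 = algebraMap ℚ K m) (α : 𝓞 K) :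
    ∃ t b : ℤ, t ^ 2 - m * b ^ 2 = 4 * Algebra.norm ℤ α := by
  set t := Algebra.trace ℤ (𝓞 K) α
  have ht : (t : ℚ) = 2 * B.repr α 0 := by
    rw [Algebra.coe_trace_int, Algebra.trace_eq_of_basis_sq B hB0 hB1]
  have hN : (Algebra.norm ℤ α : ℚ) = B.repr α 0 ^ 2 - m * B.repr α 1 ^ 2 := by
    rw [Algebra.coe_norm_int, Algebra.norm_eq_of_basis_sq B hB0 hB1]
  obtain ⟨b, hb⟩ := Rat.exists_int_eq_of_squarefree_mul_sq hm
    (c := t ^ 2 - 4 * Algebra.norm ℤ α) (x := 2 * B.repr α 1) (by push_cast; rw [ht, hN]; ring)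
  refine ⟨t, b, ?_⟩
  have : ((t ^ 2 - m * b ^ 2 : ℤ) : ℚ) = (4 * Algebra.norm ℤ α : ℤ) := by
    push_cast; rw [← hb, ht, hN]; ring
  exact_mod_cast this

end NumberField

theorem stmt_10 (p n : ℕ) (hp : p.Prime) (hp4 : p % 4 = 1) (hn : 1 ≤ n)
    (m : ℕ) (hm : (m : ℤ) = (2 * (n : ℤ) * p) ^ 2 - 1) (hsf : Squarefree m)
    (K : IntermediateField ℚ ℝ) (hK : K = ℚ⟮Real.sqrt m⟯) [NumberField K] :
    1 < NumberField.classNumber K := by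
  subst hK
  have hn1 : (1 : ℤ) ≤ n := by exact_mod_cast hn
  have hp2 : (2 : ℤ) ≤ p := by exact_mod_cast hp.two_le
  have hmsq : ¬ IsSquare m := fun h => by
    rw [Nat.isUnit_iff.mp (hsf.isUnit_of_isSquare h), Nat.cast_one] at hm
    nlinarith [mul_le_mul hn1 hp2 zero_le_two (by linarith)]
  obtain ⟨B, hB0, hBsq, hint⟩ := exists_basis_adjoin_sqrt hmsq
  have hK : finrank ℚ ℚ⟮√(m : ℝ)⟯ = 2 := by simp [finrank_eq_card_basis B]
  obtain ⟨g, hg, htr⟩ := exists_mul_self_eq_trace_eq_zero B hB0 hBsq hint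
  by_contra! hle
  have : IsPrincipalIdealRing (𝓞 ℚ⟮√(m : ℝ)⟯) :=
    classNumber_eq_one_iff.mp (le_antisymm hle Fintype.card_pos)
  obtain ⟨s, hs1⟩ := hp.exists_dvd_sq_add_one hp4
  have hs2 := Int.not_dvd_two_mul_of_dvd_sq_add_one hp (by omega) hs1
  have hsm : (p : ℤ) ∣ s ^ 2 - m := by
    have hpm : (p : ℤ) ∣ m + 1 := ⟨4 * n ^ 2 * p, by rw [hm]; ring⟩
    simpa using dvd_sub hs1 hpm
  have hnirr : ¬ Irreducible ((p : ℤ) : 𝓞 ℚ⟮√(m : ℝ)⟯) := fun hirr =>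
    hs2 (dvd_two_mul_of_prime_of_dvd_sq_sub hK hg htr hirr.prime hsm)
  obtain ⟨α, hα⟩ := exists_natAbs_norm_eq_of_not_irreducible hK hp (by exact_mod_cast hnirr)
  obtain ⟨t, b, htb⟩ :=
    exists_sq_sub_mul_sq_eq_four_mul_norm (Int.squarefree_natCast.mpr hsf) B hB0 hBsq α
  refine Int.not_isSquare_of_natAbs_prime (hα ▸ hp)
    (isSquare_of_sq_sub_pell_eq_four_mul (k := 2 * n * p) ⟨n * p, by ring⟩ ?_ t b (hm ▸ htb))
  rw [Int.abs_eq_natAbs, hα]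
  nlinarith
end

section
/- If p is a prime with p ≡ ±1 (mod 8), n ≥ 1 is an integer, and m = ((2n+1)p)^2 + 2 is square-free, then the class number of Q(√m) is greater than 1. -/
/-!
Write `q = (2n+1)p`, so `m = q² + 2 ≡ 2 (mod p)`. As `2` is a square mod `p`, there is `c` with
`p ∣ (c + √m)(c - √m)` while `p` divides neither factor in `ℤ[√m]`, which is the ring of integers
of `ℚ(√m)` because `m ≡ 3 (mod 4)` is squarefree. If the class number were `1`, the non-prime `p`
would be reducible, and one of its factors would have norm `±p`.

But `x² - (q² + 2)y² = ±p` has no integer solution, as `p ≤ q`. Multiplying by the unit `(q² + 1) - q√m`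
preserves the norm, so we may take `|y|` minimal. For such a solution the estimate
`y ≤ |q x - (q² + 1) y|` combined with `(q x - (q² + 1) y)(q x + (q² + 1) y) = q² (±p) - y²`
forces `x = q y`, hence `p = 2y²`, contradicting that `p` is odd.
-/

open Polynomial IntermediateField NumberField

-- `hred` says that multiplying `X + Y√(q²+2)` by the unit `(q² + 1) - q√(q²+2)` does not
-- make the coefficient of the square root smaller in absolute value.
theorem abs_sq_sub_mul_sq_ne_of_reduced {p q X Y : ℤ} (hp : Odd p) (hpq : p ≤ q) (hX : 0 ≤ X)
    (hY : 0 < Y) (hred : Y ≤ |q * X - (q ^ 2 + 1) * Y|) :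
    |X ^ 2 - (q ^ 2 + 2) * Y ^ 2| ≠ p := by
  intro hN
  set N := X ^ 2 - (q ^ 2 + 2) * Y ^ 2
  obtain ⟨hNlo, hNhi⟩ : -p ≤ N ∧ N ≤ p := abs_le.mp hN.le
  have hp0 : 0 < p := by rcases hp with ⟨k, rfl⟩; omega
  have hq : 0 < q := by omega
  have hsum : 0 < q * X + (q ^ 2 + 1) * Y := by positivity
  have hbound : Y * (q * X + (q ^ 2 + 1) * Y) ≤ q ^ 2 * p + Y ^ 2 :=
    calc Y * (q * X + (q ^ 2 + 1) * Y)
        ≤ |q * X - (q ^ 2 + 1) * Y| * (q * X + (q ^ 2 + 1) * Y) :=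
          mul_le_mul_of_nonneg_right hred hsum.le
      _ = |(q * X - (q ^ 2 + 1) * Y) * (q * X + (q ^ 2 + 1) * Y)| := by
          rw [abs_mul, abs_of_pos hsum]
      _ = |q ^ 2 * N - Y ^ 2| := by congr 1; ring
      _ ≤ q ^ 2 * p + Y ^ 2 := by
          rw [abs_le]; constructor <;> nlinarith [sq_nonneg q, sq_nonneg Y]
  have hXlo : q * Y ≤ X := by
    by_contra! h
    nlinarith [mul_le_mul h.le h.le hX (by positivity)]
  have hY2 : 2 * Y ^ 2 ≤ p := by
    nlinarith [mul_le_mul_of_nonneg_left hXlo (by positivity : 0 ≤ q * Y)]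
  have hXhi : X ≤ q * Y := by
    by_contra! h
    nlinarith [mul_le_mul h h (by positivity) hX]
  have hNeq : N = -(2 * Y ^ 2) := by simp only [N, le_antisymm hXhi hXlo]; ring
  rw [hNeq, abs_neg, abs_of_pos (by positivity)] at hN
  exact Int.not_even_iff_odd.mpr hp (hN ▸ even_two_mul _)

namespace Zsqrtd

theorem norm_mk_abs {d : ℤ} (z : ℤ√d) : (⟨|z.re|, |z.im|⟩ : ℤ√d).norm = z.norm := by
  simp only [norm_def, abs_mul_abs_self, mul_assoc]

theorem natAbs_norm_ne_of_odd {d q : ℤ} (hd : d = q ^ 2 + 2) {p : ℕ} (hodd : Odd p)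
    (hsq : ¬IsSquare p) (hpq : p ≤ q) (z : ℤ√d) : z.norm.natAbs ≠ p := by
  induction hk : z.im.natAbs using Nat.strong_induction_on generalizing z with
  | _ k ih =>
  intro hz
  rcases eq_or_ne z.im 0 with him | him
  · refine hsq ⟨z.re.natAbs, ?_⟩
    rw [← hz, norm_def, him]
    simp [Int.natAbs_mul]
  set w : ℤ√d := ⟨|z.re|, |z.im|⟩ * ⟨q ^ 2 + 1, -q⟩
  have hwnorm : w.norm = z.norm := by
    rw [norm_mul, norm_mk_abs]
    simp only [norm_def, hd]
    ring
  rcases lt_or_ge w.im.natAbs k with hlt | hge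
  · exact ih _ hlt w rfl (hwnorm ▸ hz)
  refine abs_sq_sub_mul_sq_ne_of_reduced (by exact_mod_cast hodd) hpq (abs_nonneg z.re)
    (abs_pos.mpr him) ?_ ?_
  · have hwim : w.im = -(q * |z.re| - (q ^ 2 + 1) * |z.im|) := by
      rw [im_mul]; ring
    rw [← abs_neg (q * _ - _), ← hwim, Int.abs_eq_natAbs, Int.abs_eq_natAbs, hk]
    exact_mod_cast hge
  · rw [← hz, Int.natCast_natAbs, ← hd, ← norm_mk_abs, norm_def]
    ring_nf

theorem not_prime_natCast_of_dvd_sq_sub {d : ℤ} {p : ℕ} (hp : 2 ≤ p) {c : ℤ}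
    (hc : (p : ℤ) ∣ c ^ 2 - d) : ¬Prime (p : ℤ√d) := by
  have hp_not_dvd (e : ℤ) (he : e.natAbs = 1) : ¬(p : ℤ√d) ∣ ⟨c, e⟩ := by
    rw [← Int.cast_natCast, intCast_dvd]
    rintro ⟨-, hpe⟩
    have := Nat.le_of_dvd one_pos (he ▸ Int.natAbs_dvd_natAbs.mpr hpe)
    omega
  have hmul : (p : ℤ√d) ∣ ⟨c, 1⟩ * ⟨c, -1⟩ := by
    rw [← Int.cast_natCast, show (⟨c, 1⟩ * ⟨c, -1⟩ : ℤ√d) = ((c ^ 2 - d : ℤ) : ℤ√d) by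
      rw [intCast_val]; ext <;> simp; ring]
    exact (intCast_dvd_intCast _ _).mpr hc
  exact fun hprime => (hprime.dvd_or_dvd hmul).elim (hp_not_dvd 1 rfl) (hp_not_dvd (-1) rfl)

theorem exists_natAbs_norm_eq_of_not_irreducible {d : ℤ} {p : ℕ} (hp : p.Prime)
    (hpi : ¬Irreducible (p : ℤ√d)) : ∃ z : ℤ√d, z.norm.natAbs = p := by
  have hpu : ¬IsUnit (p : ℤ√d) := by
    rw [← norm_eq_one_iff, norm_natCast, Int.natAbs_mul, mul_eq_one]
    exact fun h => hp.one_lt.ne' (by exact_mod_cast h.1)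
  obtain ⟨a, b, hpab, hau, hbu⟩ : ∃ a b, (p : ℤ√d) = a * b ∧ ¬IsUnit a ∧ ¬IsUnit b := by
    simpa [irreducible_iff, hpu, not_forall, not_or] using hpi
  refine ⟨a, ((hp.mul_eq_prime_sq_iff (mt norm_eq_one_iff.1 hau)
    (mt norm_eq_one_iff.1 hbu)).1 ?_).1⟩
  rw [← Int.natAbs_mul, ← norm_mul, ← hpab, norm_natCast]
  simp [sq, Int.natAbs_mul]

theorem exists_natAbs_norm_eq_of_dvd_sq_sub {d : ℤ} [IsDomain (ℤ√d)]
    [IsPrincipalIdealRing (ℤ√d)] {p : ℕ} (hp : p.Prime) {c : ℤ} (hc : (p : ℤ) ∣ c ^ 2 - d) :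
    ∃ z : ℤ√d, z.norm.natAbs = p :=
  exists_natAbs_norm_eq_of_not_irreducible hp
    (mt Irreducible.prime (not_prime_natCast_of_dvd_sq_sub hp.two_le hc))

end Zsqrtd

theorem exists_dvd_sq_sub_of_dvd_sub_two {p : ℕ} (hp : p.Prime) (hp8 : p % 8 = 1 ∨ p % 8 = 7)
    {d : ℤ} (hd : (p : ℤ) ∣ d - 2) : ∃ c : ℤ, (p : ℤ) ∣ c ^ 2 - d := by
  have := Fact.mk hp
  obtain ⟨z, hz⟩ := (ZMod.exists_sq_eq_two_iff (by omega)).mpr hp8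
  obtain ⟨c, rfl⟩ := ZMod.intCast_surjective z
  refine ⟨c, (ZMod.intCast_zmod_eq_zero_iff_dvd _ p).mp ?_⟩
  have hd2 : ((d : ℤ) : ZMod p) = 2 := by
    simpa [sub_eq_zero] using (ZMod.intCast_zmod_eq_zero_iff_dvd _ p).mpr hd
  push_cast
  rw [hd2, hz, sq, sub_self]

theorem IntermediateField.exists_eq_add_mul_of_mem_adjoin {F L : Type*} [Field F] [Field L]
    [Algebra F L] {α : L} {d : F} (hα : α ^ 2 = algebraMap F L d) {y : L} (hy : y ∈ F⟮α⟯) :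
    ∃ a b : F, y = algebraMap F L a + algebraMap F L b * α := by
  have hmonic : (X ^ 2 - C d).Monic := monic_X_pow_sub_C d two_ne_zero
  have hroot : aeval α (X ^ 2 - C d) = 0 := by simp [hα]
  have hint : IsIntegral F α := ⟨_, hmonic, hroot⟩
  rw [← mem_toSubalgebra, adjoin_simple_toSubalgebra_of_isAlgebraic hint.isAlgebraic,
    Algebra.adjoin_singleton_eq_range_aeval] at hy
  obtain ⟨f, rfl⟩ := hy
  have hdeg : (f %ₘ (X ^ 2 - C d)).degree ≤ 1 := by
    have := degree_modByMonic_lt f hmonic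
    rw [degree_X_pow_sub_C two_pos] at this
    exact Order.le_of_lt_succ this
  refine ⟨(f %ₘ (X ^ 2 - C d)).coeff 0, (f %ₘ (X ^ 2 - C d)).coeff 1, ?_⟩
  rw [AlgHom.toRingHom_eq_coe, RingHom.coe_coe, ← aeval_modByMonic_eq_self_of_root hroot,
    eq_X_add_C_of_degree_le_one hdeg]
  simp [add_comm]

theorem minpoly_add_mul_of_sq_eq {F L : Type*} [Field F] [Field L] [Algebra F L] {α : L} {d : F}
    (hα : α ^ 2 = algebraMap F L d) (hirr : α ∉ (algebraMap F L).range) (a : F) {b : F}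
    (hb : b ≠ 0) :
    minpoly F (algebraMap F L a + algebraMap F L b * α) =
      X ^ 2 - C (2 * a) * X + C (a ^ 2 - d * b ^ 2) := by
  set β := algebraMap F L a + algebraMap F L b * α
  have hmonic : (X ^ 2 - C (2 * a) * X + C (a ^ 2 - d * b ^ 2)).Monic := by monicity!
  have hroot : aeval β (X ^ 2 - C (2 * a) * X + C (a ^ 2 - d * b ^ 2)) = 0 := by
    simp only [β, map_add, map_sub, map_mul, map_pow, aeval_X, aeval_C, map_ofNat]
    linear_combination (algebraMap F L b) ^ 2 * hα
  have hint : IsIntegral F β := ⟨_, hmonic, hroot⟩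
  have hβ : β ∉ (algebraMap F L).range := by
    rintro ⟨r, hr⟩
    refine hirr ⟨(r - a) / b, ?_⟩
    rw [map_div₀, map_sub, hr, div_eq_iff ((_root_.map_ne_zero _).mpr hb)]
    ring
  refine (eq_of_monic_of_dvd_of_natDegree_le (minpoly.monic hint) hmonic
    (minpoly.dvd F β hroot) ?_).symm
  calc (X ^ 2 - C (2 * a) * X + C (a ^ 2 - d * b ^ 2)).natDegree = 2 := by compute_degree!
    _ ≤ (minpoly F β).natDegree := (minpoly.two_le_natDegree_iff hint).mpr hβ

theorem Int.not_isSquare_of_emod_four_eq_three {m : ℤ} (hm : m % 4 = 3) : ¬IsSquare m := by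
  rintro ⟨r, rfl⟩
  obtain ⟨i, rfl | rfl⟩ := Int.even_or_odd' r <;> ring_nf at hm <;> omega

theorem Int.two_dvd_of_sq_sub_mul_sq {m u w v : ℤ} (hm : m % 4 = 3)
    (h : u ^ 2 - m * w ^ 2 = 4 * v) : 2 ∣ u ∧ 2 ∣ w := by
  obtain ⟨i, rfl | rfl⟩ := Int.even_or_odd' u <;> obtain ⟨j, rfl | rfl⟩ := Int.even_or_odd' w
  · exact ⟨dvd_mul_right _ _, dvd_mul_right _ _⟩
  all_goals exfalso; obtain ⟨k, rfl⟩ : ∃ k, m = 4 * k + 3 := ⟨m / 4, by omega⟩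
  all_goals ring_nf at h; omega

theorem Rat.exists_int_eq_of_squarefree_mul_sq_s12 {m k : ℤ} (hm : Squarefree m) {t : ℚ}
    (ht : m * t ^ 2 = k) : ∃ T : ℤ, t = T := by
  have hden : (t.den : ℤ) ^ 2 ∣ m * t.num ^ 2 := by
    refine ⟨k, ?_⟩
    have : ((m * t.num ^ 2 : ℤ) : ℚ) = ((t.den : ℤ) ^ 2 * k : ℤ) := by
      push_cast
      rw [← Rat.mul_den_eq_num, ← ht]
      ring
    exact_mod_cast this
  have hcop : IsCoprime ((t.den : ℤ) ^ 2) (t.num ^ 2) :=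
    (Int.isCoprime_iff_gcd_eq_one.mpr (by simpa [Int.gcd, Nat.coprime_comm] using t.reduced)).pow
  have hunit : IsUnit (t.den : ℤ) := hm _ (sq (t.den : ℤ) ▸ hcop.dvd_of_dvd_mul_right hden)
  have : t.den = 1 := by simpa using Int.isUnit_iff_natAbs_eq.mp hunit
  exact ⟨t.num, by rw [← Rat.num_div_den t, this]; simp⟩

theorem Rat.exists_int_eq_of_trace_norm_int {m : ℤ} (hsf : Squarefree m) (hm : m % 4 = 3)
    {a b : ℚ} {u v : ℤ} (hu : (u : ℚ) = 2 * a) (hv : (v : ℚ) = a ^ 2 - m * b ^ 2) :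
    ∃ A B : ℤ, a = A ∧ b = B := by
  obtain ⟨w, hw⟩ := Rat.exists_int_eq_of_squarefree_mul_sq_s12 hsf (t := 2 * b) (k := u ^ 2 - 4 * v)
    (by push_cast; rw [hu, hv]; ring)
  have huw : u ^ 2 - m * w ^ 2 = 4 * v := by
    have : ((u ^ 2 - m * w ^ 2 : ℤ) : ℚ) = (4 * v : ℤ) := by push_cast; rw [← hw, hu, hv]; ring
    exact_mod_cast this
  obtain ⟨⟨A, rfl⟩, ⟨B, rfl⟩⟩ := Int.two_dvd_of_sq_sub_mul_sq hm huw
  refine ⟨A, B, ?_, ?_⟩ <;> push_cast at hu hw <;> linarith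

theorem exists_int_eq_of_isIntegral_add_mul {L : Type*} [Field L] [Algebra ℚ L] {α : L} {m : ℤ}
    (hsf : Squarefree m) (hm : m % 4 = 3) (hα : α ^ 2 = algebraMap ℚ L m)
    (hirr : α ∉ (algebraMap ℚ L).range) {a b : ℚ}
    (h : IsIntegral ℤ (algebraMap ℚ L a + algebraMap ℚ L b * α)) :
    ∃ A B : ℤ, a = A ∧ b = B := by
  rcases eq_or_ne b 0 with rfl | hb
  · rw [map_zero, zero_mul, add_zero,
      isIntegral_algebraMap_iff (algebraMap ℚ L).injective, IsIntegrallyClosed.isIntegral_iff] at h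
    obtain ⟨A, hA⟩ := h
    exact ⟨A, 0, by simp [← hA], by simp⟩
  have hmin := minpoly.isIntegrallyClosed_eq_field_fractions' ℚ h
  rw [minpoly_add_mul_of_sq_eq hα hirr a hb] at hmin
  set β := algebraMap ℚ L a + algebraMap ℚ L b * α
  have hcoeff (n : ℕ) := congrArg (coeff · n) hmin
  simp only [coeff_map, algebraMap_int_eq, eq_intCast] at hcoeff
  refine Rat.exists_int_eq_of_trace_norm_int hsf hm (u := -(minpoly ℤ β).coeff 1)
    (v := (minpoly ℤ β).coeff 0) ?_ ?_
  · have := hcoeff 1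
    simp only [coeff_add, coeff_sub, coeff_C_mul, coeff_X_pow, coeff_X_one, coeff_C] at this
    norm_num at this
    push_cast
    linarith
  · have := hcoeff 0
    simp only [coeff_add, coeff_sub, coeff_C_mul, coeff_X_pow, coeff_X_zero, coeff_C] at this
    norm_num at this
    linarith

namespace RealQuadratic

variable (m : ℕ)

local notation "K" => ℚ⟮(√m : ℝ)⟯

theorem algebraMap_ringOfIntegers_apply (x : 𝓞 K) :
    algebraMap (𝓞 K) ℝ x = ((x : K) : ℝ) := rfl

noncomputable def sqrtGen : 𝓞 K :=
  ⟨AdjoinSimple.gen ℚ (√m : ℝ), (isIntegral_algebraMap_iff (algebraMap K ℝ).injective).mp <| by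
    rw [AdjoinSimple.algebraMap_gen]
    exact ⟨X ^ 2 - C (m : ℤ), monic_X_pow_sub_C _ two_ne_zero, by simp⟩⟩

theorem coe_sqrtGen : ((sqrtGen m : K) : ℝ) = √m := rfl

theorem sqrtGen_mul_self : sqrtGen m * sqrtGen m = ((m : ℤ) : 𝓞 K) := by
  apply FaithfulSMul.algebraMap_injective (𝓞 K) ℝ
  simp [algebraMap_ringOfIntegers_apply, coe_sqrtGen]

noncomputable def zsqrtdEquiv (hsf : Squarefree m) (hm : m % 4 = 3) : ℤ√(m : ℤ) ≃+* 𝓞 K := by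
  refine RingEquiv.ofBijective (Zsqrtd.lift ⟨sqrtGen m, sqrtGen_mul_self m⟩) ⟨?_, ?_⟩
  · exact Zsqrtd.lift_injective _ fun n h =>
      Int.not_isSquare_of_emod_four_eq_three (by omega) ⟨n, h⟩
  intro x
  have hsq : (√m : ℝ) ^ 2 = algebraMap ℚ ℝ ((m : ℤ) : ℚ) := by simp
  have hirr : (√m : ℝ) ∉ (algebraMap ℚ ℝ).range := by
    have := irrational_sqrt_natCast_iff.mpr fun (⟨r, hr⟩ : IsSquare m) =>
      Int.not_isSquare_of_emod_four_eq_three (m := m) (by omega) ⟨r, by exact_mod_cast hr⟩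
    simpa [Irrational] using this
  obtain ⟨a, b, hab⟩ := exists_eq_add_mul_of_mem_adjoin hsq (x : K).2
  have hint : IsIntegral ℤ (algebraMap (𝓞 K) ℝ x) := (RingOfIntegers.isIntegral x).algebraMap
  rw [algebraMap_ringOfIntegers_apply, hab] at hint
  obtain ⟨A, B, rfl, rfl⟩ :=
    exists_int_eq_of_isIntegral_add_mul (Int.squarefree_natCast.mpr hsf) (by omega) hsq hirr hint
  refine ⟨⟨A, B⟩, FaithfulSMul.algebraMap_injective (𝓞 K) ℝ ?_⟩
  simp [coe_sqrtGen, algebraMap_ringOfIntegers_apply, hab]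

end RealQuadratic

theorem stmt_12_general (p n : ℕ) (hp : p.Prime) (hp8 : p % 8 = 1 ∨ p % 8 = 7)
    (m : ℕ) (hm : m = ((2 * n + 1) * p) ^ 2 + 2) (hsf : Squarefree m)
    (K : IntermediateField ℚ ℝ) (hK : K = ℚ⟮Real.sqrt m⟯) [NumberField K] :
    1 < NumberField.classNumber K := by
  subst hK
  have hodd : Odd p := Nat.odd_iff.mpr (by omega)
  have hm4 : m % 4 = 3 := by
    obtain ⟨k, hk⟩ : Odd ((2 * n + 1) * p) := Nat.odd_mul.mpr ⟨odd_two_mul_add_one n, hodd⟩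
    rw [hm, hk]; ring_nf; omega
  refine lt_of_le_of_ne (classNumber_pos _) fun h1 => ?_
  rw [eq_comm, classNumber_eq_one_iff] at h1
  let e := RealQuadratic.zsqrtdEquiv m hsf hm4
  have : IsDomain (ℤ√(m : ℤ)) := MulEquiv.isDomain _ e.toMulEquiv
  have : IsPrincipalIdealRing (ℤ√(m : ℤ)) := .of_surjective e.symm e.symm.surjective
  obtain ⟨c, hc⟩ := exists_dvd_sq_sub_of_dvd_sub_two hp hp8 (d := m)
    ⟨(2 * n + 1) ^ 2 * p, by rw [hm]; push_cast; ring⟩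
  obtain ⟨z, hz⟩ := Zsqrtd.exists_natAbs_norm_eq_of_dvd_sq_sub hp hc
  exact Zsqrtd.natAbs_norm_ne_of_odd (q := ((2 * n + 1) * p : ℕ)) (by rw [hm]; push_cast; ring)
    hodd hp.not_isSquare
    (by exact_mod_cast Nat.le_mul_of_pos_left p (by omega)) z hz

theorem stmt_12 (p n : ℕ) (hp : p.Prime) (hp8 : p % 8 = 1 ∨ p % 8 = 7)
    (hn : 1 ≤ n)
    (m : ℕ) (hm : m = ((2 * n + 1) * p) ^ 2 + 2) (hsf : Squarefree m)
    (K : IntermediateField ℚ ℝ) (hK : K = ℚ⟮Real.sqrt m⟯) [NumberField K] :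
    1 < NumberField.classNumber K :=
  stmt_12_general p n hp hp8 m hm hsf K hK
end
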